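/- arXiv:1909.12931 — 4 statements merged into one kernel-verified Lean document; each statement's English description precedes it below -/
import Mathlib

section
/- The row geometric mean weighting method satisfies scale invariance: for any multiplicative pairwise comparison matrix A, any α > 0, and any indices i, j, the RGM weight of i is at least that of j in A if and only if the RGM weight of i is at least that of j in A^(α), where (A^(α))_ij = (a_ij)^α. -/
/-! The row geometric means of `A^(α)` are those of `A` raised to the power `α`. Since
`t ↦ t ^ α` is strictly increasing on positive reals and dividing by a positive sum preserves
order, the ranking of the normalized weights is unchanged. -/

lemma Real.finsetProd_rpow_rpow_comm {ι : Type*} (s : Finset ι) (x : ι → ℝ)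
    (hx : ∀ k ∈ s, 0 ≤ x k) (a b : ℝ) :
    (∏ k ∈ s, x k ^ a) ^ b = ((∏ k ∈ s, x k) ^ b) ^ a := by
  have hprod : 0 ≤ ∏ k ∈ s, x k := Finset.prod_nonneg hx
  rw [Real.finsetProd_rpow s x hx, ← Real.rpow_mul hprod, mul_comm, Real.rpow_mul hprod]

lemma div_sum_le_div_sum_iff_rpow {ι : Type*} [Fintype ι] (w : ι → ℝ) (hw : ∀ l, 0 < w l)
    {α : ℝ} (hα : 0 < α) (i j : ι) :
    w j / ∑ l, w l ≤ w i / ∑ l, w l ↔ w j ^ α / ∑ l, w l ^ α ≤ w i ^ α / ∑ l, w l ^ α := by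
  have hne : (Finset.univ : Finset ι).Nonempty := ⟨i, Finset.mem_univ i⟩
  have hS : 0 < ∑ l, w l := Finset.sum_pos (fun l _ => hw l) hne
  have hSα : 0 < ∑ l, w l ^ α := Finset.sum_pos (fun l _ => Real.rpow_pos_of_pos (hw l) α) hne
  rw [div_le_div_iff_of_pos_right hS, div_le_div_iff_of_pos_right hSα,
    Real.rpow_le_rpow_iff (hw j).le (hw i).le hα]

theorem stmt1_general (n : ℕ) (A : Fin n → Fin n → ℝ)
    (hpos : ∀ i j, 0 < A i j)
    (α : ℝ) (hα : 0 < α) (i j : Fin n) :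
    ((∏ k, A i k) ^ ((n : ℝ)⁻¹) / ∑ l, (∏ k, A l k) ^ ((n : ℝ)⁻¹) ≥
      (∏ k, A j k) ^ ((n : ℝ)⁻¹) / ∑ l, (∏ k, A l k) ^ ((n : ℝ)⁻¹)) ↔
    ((∏ k, (A i k) ^ α) ^ ((n : ℝ)⁻¹) / ∑ l, (∏ k, (A l k) ^ α) ^ ((n : ℝ)⁻¹) ≥
      (∏ k, (A j k) ^ α) ^ ((n : ℝ)⁻¹) / ∑ l, (∏ k, (A l k) ^ α) ^ ((n : ℝ)⁻¹)) := by
  have hrow : ∀ l, (∏ k, A l k ^ α) ^ (n : ℝ)⁻¹ = ((∏ k, A l k) ^ (n : ℝ)⁻¹) ^ α := fun l =>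
    Real.finsetProd_rpow_rpow_comm _ _ (fun k _ => (hpos l k).le) _ _
  have hrgm_pos : ∀ l, 0 < (∏ k, A l k) ^ (n : ℝ)⁻¹ := fun l =>
    Real.rpow_pos_of_pos (Finset.prod_pos fun k _ => hpos l k) _
  simp only [hrow]
  exact div_sum_le_div_sum_iff_rpow _ hrgm_pos hα i j

/-- The row geometric mean method is scale invariant. -/
theorem stmt1 (n : ℕ) (A : Fin n → Fin n → ℝ)
    (hpos : ∀ i j, 0 < A i j) (hrec : ∀ i j, A j i = 1 / A i j)
    (α : ℝ) (hα : 0 < α) (i j : Fin n) :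
    ((∏ k, A i k) ^ ((n : ℝ)⁻¹) / ∑ l, (∏ k, A l k) ^ ((n : ℝ)⁻¹) ≥
      (∏ k, A j k) ^ ((n : ℝ)⁻¹) / ∑ l, (∏ k, A l k) ^ ((n : ℝ)⁻¹)) ↔
    ((∏ k, (A i k) ^ α) ^ ((n : ℝ)⁻¹) / ∑ l, (∏ k, (A l k) ^ α) ^ ((n : ℝ)⁻¹) ≥
      (∏ k, (A j k) ^ α) ^ ((n : ℝ)⁻¹) / ∑ l, (∏ k, (A l k) ^ α) ^ ((n : ℝ)⁻¹)) :=
  stmt1_general n A hpos α hα i j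
end

section
/- The eigenvector method satisfies row dominance: if A is a positive multiplicative pairwise comparison matrix, w is a positive eigenvector of A associated with its maximal (Perron) eigenvalue, and a_ik ≥ a_jk for all k, then w_i ≥ w_j. -/
theorem le_of_eigenvector_of_row_le {ι R : Type*} [Fintype ι] [Semiring R] [LinearOrder R]
    [IsStrictOrderedRing R] {A : ι → ι → R} {w : ι → R} (hw : ∀ k, 0 ≤ w k) {lam : R}
    (hlam : 0 < lam) (heig : ∀ i, ∑ k, A i k * w k = lam * w i) {i j : ι}
    (hdom : ∀ k, A j k ≤ A i k) : w j ≤ w i := by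
  refine le_of_mul_le_mul_left ?_ hlam
  rw [← heig i, ← heig j]
  exact Finset.sum_le_sum fun k _ => mul_le_mul_of_nonneg_right (hdom k) (hw k)

theorem stmt5_general (n : ℕ) (A : Fin n → Fin n → ℝ)
    (w : Fin n → ℝ) (hw : ∀ i, 0 < w i) (lam : ℝ) (hlam : 0 < lam)
    (heig : ∀ i, ∑ k, A i k * w k = lam * w i)
    (i j : Fin n) (hdom : ∀ k, A i k ≥ A j k) :
    w i ≥ w j :=
  le_of_eigenvector_of_row_le (fun k => (hw k).le) hlam heig hdom

/-- The eigenvector method satisfies row dominance. -/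
theorem stmt5 (n : ℕ) (A : Fin n → Fin n → ℝ)
    (hpos : ∀ i j, 0 < A i j) (hrec : ∀ i j, A j i = 1 / A i j)
    (w : Fin n → ℝ) (hw : ∀ i, 0 < w i) (lam : ℝ) (hlam : 0 < lam)
    (heig : ∀ i, ∑ k, A i k * w k = lam * w i)
    (i j : Fin n) (hdom : ∀ k, A i k ≥ A j k) :
    w i ≥ w j :=
  stmt5_general n A w hw lam hlam heig i j hdom
end

section
/- Let A be a multiplicative pairwise comparison matrix and for α ≥ 0 let w(α) denote the RGM weight vector of A^(α). If alternative i strictly dominates all others in the sense that ∏_k a_ik > ∏_k a_jk for every j ≠ i, then w_i(α) → 1 as α → ∞. -/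
/-! The row geometric mean of `A^(α)` is `P_l ^ (α / n)` with `P_l = ∏ k, A l k`. Dividing through
by `P_i ^ (α / n)`, every other term becomes a power of a ratio `P_l / P_i < 1`, which vanishes
as `α → ∞`. -/

open Filter Topology Finset

lemma Real.finsetProd_rpow_rpow {ι : Type*} (s : Finset ι) {f : ι → ℝ}
    (hf : ∀ k ∈ s, 0 ≤ f k) (a b : ℝ) :
    (∏ k ∈ s, f k ^ a) ^ b = (∏ k ∈ s, f k) ^ (a * b) := by
  rw [Real.finsetProd_rpow s f hf, Real.rpow_mul (prod_nonneg hf)]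

lemma rpow_div_sum_rpow_eq_inv_sum {ι : Type*} [Fintype ι] {p : ι → ℝ} (hp : ∀ l, 0 < p l)
    (i : ι) (t : ℝ) :
    p i ^ t / ∑ l, p l ^ t = (∑ l, (p l / p i) ^ t)⁻¹ := by
  rw [sum_congr rfl fun l _ => Real.div_rpow (hp l).le (hp i).le t, ← sum_div, inv_div]

theorem tendsto_rpow_div_sum_rpow_atTop {ι : Type*} [Fintype ι] {p : ι → ℝ}
    (hp : ∀ l, 0 < p l) {i : ι} (hi : ∀ j, j ≠ i → p j < p i) :
    Tendsto (fun t : ℝ => p i ^ t / ∑ l, p l ^ t) atTop (𝓝 1) := by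
  classical
  have hterm : ∀ l, Tendsto (fun t : ℝ => (p l / p i) ^ t) atTop
      (𝓝 (if l = i then 1 else 0)) := by
    intro l
    by_cases hl : l = i
    · subst hl
      simp only [div_self (hp l).ne', Real.one_rpow, if_true]
      exact tendsto_const_nhds
    · rw [if_neg hl]
      exact tendsto_rpow_atTop_of_base_lt_one _ (by linarith [div_pos (hp l) (hp i)])
        ((div_lt_one (hp i)).2 (hi l hl))
  have hsum : Tendsto (fun t : ℝ => ∑ l, (p l / p i) ^ t) atTop (𝓝 1) := by
    simpa using tendsto_finsetSum univ fun l _ => hterm l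
  simpa only [rpow_div_sum_rpow_eq_inv_sum hp, inv_one] using hsum.inv₀ one_ne_zero

theorem stmt13_general (n : ℕ) (A : Fin n → Fin n → ℝ)
    (hpos : ∀ i j, 0 < A i j)
    (i : Fin n) (hdom : ∀ j, j ≠ i → (∏ k, A j k) < ∏ k, A i k) :
    Filter.Tendsto
      (fun α : ℝ =>
        (∏ k, A i k ^ α) ^ ((n : ℝ)⁻¹) / ∑ l, (∏ k, A l k ^ α) ^ ((n : ℝ)⁻¹))
      Filter.atTop (nhds 1) := by
  have hn : (0 : ℝ) < n := by exact_mod_cast i.pos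
  have hrow : ∀ l (α : ℝ), (∏ k, A l k ^ α) ^ (n : ℝ)⁻¹ = (∏ k, A l k) ^ (α * (n : ℝ)⁻¹) :=
    fun l α => Real.finsetProd_rpow_rpow _ (fun k _ => (hpos l k).le) α _
  simp only [hrow]
  exact (tendsto_rpow_div_sum_rpow_atTop (fun l => prod_pos fun k _ => hpos l k) hdom).comp
    (tendsto_id.atTop_mul_const (inv_pos.2 hn))

/-- If alternative i strictly dominates all others (in row products), its RGM
weight of the α-th power matrix tends to 1 as α → ∞. -/
theorem stmt13 (n : ℕ) (A : Fin n → Fin n → ℝ)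
    (hpos : ∀ i j, 0 < A i j) (hrec : ∀ i j, A j i = 1 / A i j)
    (i : Fin n) (hdom : ∀ j, j ≠ i → (∏ k, A j k) < ∏ k, A i k) :
    Filter.Tendsto
      (fun α : ℝ =>
        (∏ k, A i k ^ α) ^ ((n : ℝ)⁻¹) / ∑ l, (∏ k, A l k ^ α) ^ ((n : ℝ)⁻¹))
      Filter.atTop (nhds 1) :=
  stmt13_general n A hpos i hdom
end

section
/- Let r_1, …, r_n be positive reals and for α ≥ 0 define w_i(α) = r_i^α / ∑_k r_k^α. Then the function α ↦ ∑_i w_i(α)² (the HHI of the RGM weights of A^(α)) is nondecreasing in α. -/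
/-!
Write `r^β = r^α · r^(β-α)`: the weights at `β` are the weights `a = r^α` reweighted by
`u = r^(β-α)`, and for `α, β - α ≥ 0` both `a` and `u` increase with `r`. Reweighting
by a factor that monovaries with the weights can only concentrate them:
`(∑ a²)(∑ a u)² ≤ (∑ a²)(∑ a)(∑ a u²) ≤ (∑ a)²(∑ a² u²)`, where the first step is
Cauchy–Schwarz and the second Chebyshev's sum inequality, both weighted by `a`.
-/

open Finset

variable {ι : Type*}

theorem monovary_rpow_rpow {r : ι → ℝ} (hr : 0 ≤ r) {a b : ℝ} (ha : 0 ≤ a) (hb : 0 ≤ b) :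
    Monovary (fun i => r i ^ a) (fun i => r i ^ b) := fun i j hij =>
  Real.rpow_le_rpow (hr i)
    (lt_of_not_ge fun hji => hij.not_ge (Real.rpow_le_rpow (hr j) hji hb)).le ha

variable [Fintype ι]

theorem Monovary.sum_mul_sum_le_sum_mul_sum_of_nonneg {w f g : ι → ℝ} (hw : 0 ≤ w)
    (hfg : Monovary f g) :
    (∑ i, w i * f i) * (∑ i, w i * g i) ≤ (∑ i, w i) * ∑ i, w i * f i * g i := by
  have hsum : 0 ≤ ∑ i, ∑ j, w i * w j * ((f j - f i) * (g j - g i)) :=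
    sum_nonneg fun i _ => sum_nonneg fun j _ =>
      mul_nonneg (mul_nonneg (hw i) (hw j)) (hfg.sub_mul_sub_nonneg i j)
  have hexpand : ∑ i, ∑ j, w i * w j * ((f j - f i) * (g j - g i)) =
      2 * ((∑ i, w i) * (∑ i, w i * f i * g i) - (∑ i, w i * f i) * (∑ i, w i * g i)) := by
    calc ∑ i, ∑ j, w i * w j * ((f j - f i) * (g j - g i))
        = ∑ i, ∑ j, (w i * (w j * f j * g j) + w i * f i * g i * w j
            - w i * f i * (w j * g j) - w i * g i * (w j * f j)) :=
          sum_congr rfl fun i _ => sum_congr rfl fun j _ => by ring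
      _ = _ := by
          simp only [sum_add_distrib, sum_sub_distrib, ← mul_sum, ← sum_mul]
          ring
  linarith

theorem sum_sq_div_sum_le_sum_mul_sq_div_sum_of_monovary {a u : ι → ℝ} (ha : 0 ≤ a)
    (hu : 0 ≤ u) (hau : Monovary a u) (hpos : 0 < ∑ i, a i * u i) :
    ∑ i, (a i / ∑ k, a k) ^ 2 ≤ ∑ i, (a i * u i / ∑ k, a k * u k) ^ 2 := by
  simp only [div_pow, ← sum_div]
  rcases (sum_nonneg fun i _ => ha i : 0 ≤ ∑ k, a k).eq_or_lt with hS | hS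
  · rw [← hS]
    simp only [ne_eq, OfNat.ofNat_ne_zero, not_false_eq_true, zero_pow, div_zero]
    positivity
  rw [div_le_div_iff₀ (by positivity) (by positivity)]
  have cauchySchwarz : (∑ i, a i * u i) ^ 2 ≤ (∑ i, a i) * ∑ i, a i * u i ^ 2 := by
    simpa only [sq, mul_assoc] using
      (monovary_self u).sum_mul_sum_le_sum_mul_sum_of_nonneg ha
  have chebyshev : (∑ i, a i ^ 2) * (∑ i, a i * u i ^ 2) ≤ (∑ i, a i) * ∑ i, (a i * u i) ^ 2 := by
    simpa only [Pi.pow_apply, sq, mul_assoc, mul_left_comm] using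
      (hau.pow_right₀ hu 2).sum_mul_sum_le_sum_mul_sum_of_nonneg ha
  calc (∑ i, a i ^ 2) * (∑ i, a i * u i) ^ 2
      ≤ (∑ i, a i ^ 2) * ((∑ i, a i) * ∑ i, a i * u i ^ 2) := by gcongr
    _ = (∑ i, a i ^ 2) * (∑ i, a i * u i ^ 2) * ∑ i, a i := by ring
    _ ≤ (∑ i, a i) * (∑ i, (a i * u i) ^ 2) * ∑ i, a i := by gcongr
    _ = (∑ i, (a i * u i) ^ 2) * (∑ i, a i) ^ 2 := by ring

/-- The HHI of softmax-type weights is nondecreasing in α on [0, ∞). -/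
theorem stmt15 (n : ℕ) (r : Fin n → ℝ) (hr : ∀ i, 0 < r i) :
    MonotoneOn (fun α : ℝ => ∑ i, (r i ^ α / ∑ k, r k ^ α) ^ 2)
      (Set.Ici (0 : ℝ)) := by
  intro α hα β _ hαβ
  rcases isEmpty_or_nonempty (Fin n) with hn | hn
  · simp
  have hsplit : ∀ i, r i ^ β = r i ^ α * r i ^ (β - α) := fun i => by
    rw [← Real.rpow_add (hr i), add_sub_cancel]
  simp only [hsplit]
  have hpos : ∀ (γ : ℝ) i, 0 < r i ^ γ := fun γ i => Real.rpow_pos_of_pos (hr i) γ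
  exact sum_sq_div_sum_le_sum_mul_sq_div_sum_of_monovary
    (fun i => (hpos α i).le) (fun i => (hpos _ i).le)
    (monovary_rpow_rpow (fun i => (hr i).le) hα (sub_nonneg.2 hαβ))
    (sum_pos (fun i _ => mul_pos (hpos α i) (hpos _ i)) univ_nonempty)
end
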